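/- arXiv:1811.08355 — 2 statements merged into one kernel-verified Lean document; each statement's English description precedes it below -/
import Mathlib

section
/- Let f : ℝ_{>0}^b → ℝ_{>0}^b be a standard interference function, i.e., f satisfies (i) positivity: f(v) > 0 componentwise for all v > 0; (ii) monotonicity: v ≤ v' (componentwise) implies f(v) ≤ f(v'); and (iii) scalability: for all α > 1 and v > 0, α f(v) > f(α v) componentwise. If f has a fixed point, then that fixed point is unique. -/
/-- A standard interference function (positivity, monotonicity, scalability on the
positive orthant) has at most one fixed point in the positive orthant. -/
theorem standard_function_fixed_point_unique {b : ℕ}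
    (f : (Fin b → ℝ) → (Fin b → ℝ))
    (hpos : ∀ v : Fin b → ℝ, (∀ i, 0 < v i) → ∀ i, 0 < f v i)
    (hmono : ∀ v v' : Fin b → ℝ, (∀ i, 0 < v i) → (∀ i, 0 < v' i) →
      (∀ i, v i ≤ v' i) → ∀ i, f v i ≤ f v' i)
    (hscal : ∀ (α : ℝ) (v : Fin b → ℝ), 1 < α → (∀ i, 0 < v i) →
      ∀ i, f (α • v) i < α * f v i) :
    ∀ v v' : Fin b → ℝ, (∀ i, 0 < v i) → (∀ i, 0 < v' i) →
      f v = v → f v' = v' → v = v' := by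
  have key : ∀ w w' : Fin b → ℝ, (∀ i, 0 < w i) → (∀ i, 0 < w' i) →
      f w = w → f w' = w' → ∀ i, w i ≤ w' i := by
    intro w w' hw hw' hfw hfw' i
    by_contra h
    push_neg at h
    have hne : (Finset.univ : Finset (Fin b)).Nonempty := ⟨i, Finset.mem_univ i⟩
    set β := Finset.univ.sup' hne (fun j => w j / w' j) with hβ
    have hβge : ∀ j, w j / w' j ≤ β := fun j => Finset.le_sup' (f := fun j => w j / w' j) (Finset.mem_univ j)
    obtain ⟨j0, _, hj0⟩ := Finset.exists_mem_eq_sup' hne (fun j => w j / w' j)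
    have hβ1 : 1 < β := lt_of_lt_of_le ((one_lt_div (hw' i)).2 h) (hβge i)
    have hle : ∀ j, w j ≤ β * w' j := fun j => (div_le_iff₀ (hw' j)).1 (hβge j)
    have hcomp : ∀ j, w j < β * w' j := by
      intro j
      calc w j = f w j := by rw [hfw]
        _ ≤ f (β • w') j := by
            refine hmono w (β • w') hw (fun k => ?_) (fun k => ?_) j
            · have : (β • w') k = β * w' k := rfl
              rw [this]
              exact mul_pos (lt_trans one_pos hβ1) (hw' k)
            · simpa using hle k
        _ < β * f w' j := hscal β w' hβ1 hw' j
        _ = β * w' j := by rw [hfw']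
    have heq : w j0 = β * w' j0 := by
      rw [show β = w j0 / w' j0 from hj0]
      field_simp [(hw' j0).ne']
    exact absurd heq (ne_of_lt (hcomp j0))
  intro v v' hv hv' hfv hfv'
  funext i
  exact le_antisymm (key v v' hv hv' hfv hfv' i) (key v' v hv' hv hfv' hfv i)
end

section
/- Let H be the (k+1) × n matrix whose first row is (C_s, C_l, ..., C_L) and whose remaining rows form the identity pattern attaching one measurement to each variable: row b+1 has 1 in column b and 0 elsewhere. Let R = diag(v, v_s, v_l, ..., v_L) with all entries positive. Then the (s,s) entry of (Hᵀ R⁻¹ H)⁻¹ satisfies 1/[(Hᵀ R⁻¹ H)⁻¹]_{ss} = 1/v_s + C_s² / (v + Σ_{b ≠ s} C_b² v_b), assuming C_s ≠ 0. -/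
open Matrix Finset

/-!
`Hᵀ R⁻¹ H = diag(1/v_b) + v⁻¹ C Cᵀ` is a rank-one update of a diagonal matrix, so the
Sherman–Morrison formula (Woodbury with a `1 × 1` core) inverts it explicitly: its `(s,s)` entry is
`v_s - (v_s C_s)² / (v + ∑_b C_b² v_b)`. Splitting the `b = s` term off the sum and inverting this
scalar gives the decomposition.
-/

theorem transpose_fromRows_mul_diagonal_mul_fromRows {R m₁ m₂ n : Type*} [Semiring R]
    [Fintype m₁] [Fintype m₂] [DecidableEq m₁] [DecidableEq m₂]
    (A₁ : Matrix m₁ n R) (A₂ : Matrix m₂ n R) (d₁ : m₁ → R) (d₂ : m₂ → R) :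
    (fromRows A₁ A₂)ᵀ * diagonal (Sum.elim d₁ d₂) * fromRows A₁ A₂
      = A₁ᵀ * diagonal d₁ * A₁ + A₂ᵀ * diagonal d₂ * A₂ := by
  rw [transpose_fromRows, ← fromBlocks_diagonal, fromCols_mul_fromBlocks, fromCols_mul_fromRows]
  simp

theorem inv_diagonal_of_ne_zero {K ι : Type*} [Field K] [Fintype ι] [DecidableEq ι] {e : ι → K}
    (he : ∀ i, e i ≠ 0) : (diagonal e)⁻¹ = diagonal e⁻¹ :=
  inv_eq_right_inv <| by
    rw [diagonal_mul_diagonal, ← diagonal_one]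
    exact congrArg diagonal (funext fun i => mul_inv_cancel₀ (he i))

theorem isUnit_diagonal_of_ne_zero {K ι : Type*} [Field K] [Fintype ι] [DecidableEq ι]
    {e : ι → K} (he : ∀ i, e i ≠ 0) : IsUnit (diagonal e) :=
  isUnit_diagonal.mpr (Pi.isUnit_iff.mpr fun i => (he i).isUnit)

theorem inv_diagonal_inv_add_replicateCol_mul_replicateRow {K n : Type*} [Field K] [Fintype n]
    [DecidableEq n] {d : n → K} (hd : ∀ i, d i ≠ 0) (c : n → K) {v : K} (hv : v ≠ 0)
    (hT : v + ∑ b, c b ^ 2 * d b ≠ 0) :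
    (diagonal d⁻¹ + replicateCol Unit c * diagonal (fun _ : Unit => v⁻¹) * replicateRow Unit c)⁻¹
      = diagonal d - (v + ∑ b, c b ^ 2 * d b)⁻¹ • vecMulVec (d * c) (d * c) := by
  have hd_inv : ∀ i, d⁻¹ i ≠ 0 := fun i => inv_ne_zero (hd i)
  have hcore : (diagonal fun _ : Unit => v⁻¹)⁻¹
      + replicateRow Unit c * (diagonal d⁻¹)⁻¹ * replicateCol Unit c
      = diagonal fun _ : Unit => v + ∑ b, c b ^ 2 * d b := by
    rw [inv_diagonal_of_ne_zero hd_inv, inv_diagonal_of_ne_zero fun _ => inv_ne_zero hv, inv_inv]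
    ext ⟨⟩ ⟨⟩
    simp only [Matrix.add_apply, diagonal_apply_eq, Pi.inv_apply, inv_inv, mul_apply,
      replicateRow_apply, replicateCol_apply, diagonal_apply, mul_ite, mul_zero, sum_ite_eq',
      mem_univ, if_true, add_right_inj]
    exact sum_congr rfl fun _ _ => by ring
  rw [add_mul_mul_inv_eq_sub _ _ _ _ (isUnit_diagonal_of_ne_zero hd_inv)
    (isUnit_diagonal_of_ne_zero fun _ => inv_ne_zero hv)
    (hcore ▸ isUnit_diagonal_of_ne_zero fun _ => hT), hcore, inv_diagonal_of_ne_zero hd_inv,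
    inv_inv, inv_diagonal_of_ne_zero fun _ => hT]
  ext i j
  simp only [Matrix.sub_apply, diagonal_apply, mul_apply, univ_unique, PUnit.default_eq_unit,
    replicateCol_apply, ite_mul, zero_mul, sum_ite_eq, mem_univ, if_true,
    Pi.inv_apply, sum_const, card_singleton, one_smul, replicateRow_apply, mul_ite, mul_zero,
    sum_ite_eq', vecMulVec, Pi.mul_apply, smul_of, of_apply, Pi.smul_apply, smul_eq_mul,
    sub_right_inj]
  ring

theorem one_div_sub_sq_div_add_eq_one_div_add_sq_div {K : Type*} [Field K] {a S : K} (c : K)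
    (ha : a ≠ 0) (hS : S ≠ 0) (hT : S + c ^ 2 * a ≠ 0) :
    1 / (a - (a * c) ^ 2 / (S + c ^ 2 * a)) = 1 / a + c ^ 2 / S := by
  have hsub : a - (a * c) ^ 2 / (S + c ^ 2 * a) = a * S / (S + c ^ 2 * a) := by
    rw [eq_div_iff hT, sub_mul, div_mul_cancel₀ _ hT]
    ring
  rw [hsub, one_div_div, div_add_div _ _ ha hS]
  ring

theorem wls_variance_decomposition_general {n : ℕ} (C : Fin n → ℝ) (s : Fin n)
    (v : ℝ) (hv : 0 < v) (vd : Fin n → ℝ) (hvd : ∀ b, 0 < vd b)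
    (H : Matrix (Unit ⊕ Fin n) (Fin n) ℝ)
    (hH : H = Matrix.of fun r c =>
      Sum.elim (fun _ => C c) (fun b => if b = c then (1 : ℝ) else 0) r)
    (R : Matrix (Unit ⊕ Fin n) (Unit ⊕ Fin n) ℝ)
    (hR : R = Matrix.diagonal (Sum.elim (fun _ => v) vd)) :
    1 / ((Hᵀ * R⁻¹ * H)⁻¹ s s)
      = 1 / vd s + (C s) ^ 2 / (v + ∑ b ∈ Finset.univ.erase s, (C b) ^ 2 * vd b) := by
  have hH_fromRows : H = fromRows (replicateRow Unit C) 1 := by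
    rw [hH]; ext (r | b) c <;> rfl
  have hR_inv : R⁻¹ = diagonal (Sum.elim (fun _ => v⁻¹) vd⁻¹) := by
    rw [hR, inv_diagonal_of_ne_zero, ← Sum.elim_inv_inv]
    · rfl
    · rintro (r | b)
      exacts [hv.ne', (hvd b).ne']
  have hgram : Hᵀ * R⁻¹ * H = diagonal vd⁻¹
      + replicateCol Unit C * diagonal (fun _ : Unit => v⁻¹) * replicateRow Unit C := by
    rw [hH_fromRows, hR_inv, transpose_fromRows_mul_diagonal_mul_fromRows, transpose_replicateRow,
      transpose_one, one_mul, mul_one, add_comm]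
  set S := v + ∑ b ∈ univ.erase s, C b ^ 2 * vd b
  have hS : 0 < S := add_pos_of_pos_of_nonneg hv
    (sum_nonneg fun b _ => mul_nonneg (sq_nonneg _) (hvd b).le)
  have hT : v + ∑ b, C b ^ 2 * vd b = S + C s ^ 2 * vd s := by
    rw [← add_sum_erase _ _ (mem_univ s)]; ring
  have hT_pos : 0 < S + C s ^ 2 * vd s :=
    add_pos_of_pos_of_nonneg hS (mul_nonneg (sq_nonneg _) (hvd s).le)
  rw [hgram, inv_diagonal_inv_add_replicateCol_mul_replicateRow (fun b => (hvd b).ne') C hv.ne'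
    (hT ▸ hT_pos.ne'), hT]
  simp only [Matrix.sub_apply, Matrix.smul_apply, diagonal_apply_eq, vecMulVec_apply,
    Pi.mul_apply, smul_eq_mul]
  rw [← sq, inv_mul_eq_div]
  exact one_div_sub_sq_div_add_eq_one_div_add_sq_div (C s) (hvd s).ne' hS.ne' hT_pos.ne'

/-- WLS posterior-variance decomposition: for the stacked matrix `H` whose first row
is `(C_s, C_l, …, C_L)` and whose remaining rows are the identity, with
`R = diag(v, v_s, v_l, …, v_L)`, the `(s,s)` entry of `(Hᵀ R⁻¹ H)⁻¹` satisfies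
`1/[(Hᵀ R⁻¹ H)⁻¹]_{ss} = 1/v_s + C_s² / (v + ∑_{b ≠ s} C_b² v_b)`. -/
theorem wls_variance_decomposition {n : ℕ} (C : Fin n → ℝ) (s : Fin n)
    (hCs : C s ≠ 0) (v : ℝ) (hv : 0 < v) (vd : Fin n → ℝ) (hvd : ∀ b, 0 < vd b)
    (H : Matrix (Unit ⊕ Fin n) (Fin n) ℝ)
    (hH : H = Matrix.of fun r c =>
      Sum.elim (fun _ => C c) (fun b => if b = c then (1 : ℝ) else 0) r)
    (R : Matrix (Unit ⊕ Fin n) (Unit ⊕ Fin n) ℝ)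
    (hR : R = Matrix.diagonal (Sum.elim (fun _ => v) vd)) :
    1 / ((Hᵀ * R⁻¹ * H)⁻¹ s s)
      = 1 / vd s + (C s) ^ 2 / (v + ∑ b ∈ Finset.univ.erase s, (C b) ^ 2 * vd b) :=
  wls_variance_decomposition_general C s v hv vd hvd H hH R hR
end
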